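/- arXiv:math/0606058 — 2 statements merged into one kernel-verified Lean document; each statement's English description precedes it below -/
import Mathlib

section
/- For a model delta net φ_ε(x) = φ(x/ε)/ε, the limit as ε→0 of (H(·−x₀)∗φ_ε)·(δ_{x₀}∗φ_ε) exists in D'(ℝ) and equals δ_{x₀}/2. -/
open MeasureTheory Filter Real Set

lemma aux_hasDerivAt_primIic (φ : ℝ → ℝ) (hc : Continuous φ) (hi : Integrable φ) (t : ℝ) :
    HasDerivAt (fun s => ∫ u in Iic s, φ u) (φ t) t := by
  have h : ∀ s, (∫ u in Iic s, φ u) = (∫ u in Iic 0, φ u) + ∫ u in (0:ℝ)..s, φ u := by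
    intro s
    rw [← intervalIntegral.integral_Iic_sub_Iic hi.integrableOn hi.integrableOn]; ring
  rw [show (fun s => ∫ u in Iic s, φ u)
      = fun s => (∫ u in Iic 0, φ u) + ∫ u in (0:ℝ)..s, φ u from funext h]
  exact ((intervalIntegral.integral_hasDerivAt_right hi.intervalIntegrable
    (hc.stronglyMeasurable.stronglyMeasurableAtFilter) hc.continuousAt)).const_add _

lemma aux_half (φ : ℝ → ℝ) (hc : Continuous φ) (hs : HasCompactSupport φ)
    (h1 : (∫ x, φ x) = 1) :
    (∫ t, (∫ u in Iic t, φ u) * φ t) = 1 / 2 := by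
  have hi : Integrable φ := hc.integrable_of_hasCompactSupport hs
  obtain ⟨R, hR0, hR⟩ : ∃ R : ℝ, 0 ≤ R ∧ tsupport φ ⊆ Icc (-R) R := by
    obtain ⟨r, hr⟩ := hs.isCompact.isBounded.subset_closedBall 0
    refine ⟨|r|, abs_nonneg r, fun x hx => ?_⟩
    have := hr hx
    simp only [Metric.mem_closedBall, Real.dist_eq, sub_zero] at this
    constructor <;> [linarith [neg_abs_le x, le_abs_self r];
      linarith [le_abs_self x, le_abs_self r]]
  set a : ℝ := -(R + 1) with ha
  set b : ℝ := R + 1 with hb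
  have hzero : ∀ x, x ∉ Icc (-R) R → φ x = 0 := fun x hx =>
    image_eq_zero_of_notMem_tsupport (fun h => hx (hR h))
  set Φ : ℝ → ℝ := fun s => ∫ u in Iic s, φ u with hΦdef
  have hΦd : ∀ t, HasDerivAt Φ (φ t) t := aux_hasDerivAt_primIic φ hc hi
  have hΦc : Continuous Φ := continuous_iff_continuousAt.2 fun t => (hΦd t).continuousAt
  have hΦa : Φ a = 0 := by
    refine setIntegral_eq_zero_of_forall_eq_zero fun x hx => ?_
    refine hzero x fun hx2 => ?_
    simp only [mem_Iic] at hx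
    have := hx2.1
    linarith
  have hΦb : Φ b = 1 := by
    have h2 : (∫ x in Ioi b, φ x) = 0 := by
      refine setIntegral_eq_zero_of_forall_eq_zero fun x hx => ?_
      refine hzero x fun hx2 => ?_
      simp only [mem_Ioi] at hx
      have := hx2.2
      linarith
    have := intervalIntegral.integral_Iic_add_Ioi (hi.integrableOn) (hi.integrableOn) (b := b)
    rw [h1, h2] at this
    simpa using this
  have hF : ∀ t, HasDerivAt (fun s => Φ s ^ 2 / 2) (Φ t * φ t) t := by
    intro t
    have := ((hΦd t).mul (hΦd t)).div_const 2
    have h2 : (fun s => Φ s ^ 2 / 2) = fun s => Φ s * Φ s / 2 := by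
      funext s; ring
    rw [h2]
    refine this.congr_deriv ?_
    ring
  have hcont : Continuous fun t => Φ t * φ t := hΦc.mul hc
  have hsupp : ∀ x ∉ Ioc a b, Φ x * φ x = 0 := by
    intro x hx
    have : φ x = 0 := by
      refine hzero x fun hx2 => hx ?_
      exact ⟨by linarith [hx2.1], by linarith [hx2.2]⟩
    rw [this, mul_zero]
  calc (∫ t, Φ t * φ t) = ∫ t in Ioc a b, Φ t * φ t :=
        (setIntegral_eq_integral_of_forall_compl_eq_zero hsupp).symm
    _ = ∫ t in a..b, Φ t * φ t :=
        (intervalIntegral.integral_of_le (by simp only [ha, hb]; linarith)).symm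
    _ = Φ b ^ 2 / 2 - Φ a ^ 2 / 2 :=
        intervalIntegral.integral_eq_sub_of_hasDerivAt (fun t _ => hF t)
          (hcont.intervalIntegrable a b)
    _ = 1 / 2 := by rw [hΦa, hΦb]; norm_num

lemma aux_inner (x₀ : ℝ) (φ : ℝ → ℝ) (ε : ℝ) (hε : 0 < ε) (x : ℝ) :
    (∫ y, (if x₀ ≤ y then (1 : ℝ) else 0) * (φ ((x - y) / ε) / ε))
      = ∫ u in Iic ((x - x₀) / ε), φ u := by
  set s : ℝ := (x - x₀) / ε with hs
  set h : ℝ → ℝ := fun u => (if u ≤ s then (1:ℝ) else 0) * (φ u / ε) with hh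
  have step1 : ∀ y, (if x₀ ≤ y then (1 : ℝ) else 0) * (φ ((x - y) / ε) / ε)
      = h ((x - y) / ε) := by
    intro y
    have : ((x - y) / ε ≤ s) ↔ x₀ ≤ y := by
      rw [hs, div_le_div_iff_of_pos_right hε]
      constructor <;> intro <;> linarith
    simp only [hh, this]
  simp only [step1]
  have step2 : (∫ y, h ((x - y) / ε)) = ∫ y, (fun z => h (z / ε)) (x + y) := by
    rw [← integral_neg_eq_self]
    congr 1; funext y; simp [sub_eq_add_neg]
  have step3 : (∫ y, (fun z => h (z / ε)) (x + y)) = ∫ z, (fun z => h (z / ε)) z := by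
    exact integral_add_left_eq_self (fun z => h (z / ε)) x
  rw [step2, step3]
  simp only
  rw [Measure.integral_comp_div]
  have : (∫ u, h u) = (∫ u in Iic s, φ u) / ε := by
    have : ∀ u, h u = (Iic s).indicator φ u / ε := by
      intro u
      simp only [hh, indicator_apply, mem_Iic]
      split <;> simp
    simp only [this]
    rw [integral_div, integral_indicator measurableSet_Iic]
  rw [this, abs_of_pos hε, smul_eq_mul, mul_div_cancel₀ _ (ne_of_gt hε)]

lemma aux_outer (x₀ : ℝ) (φ ψ : ℝ → ℝ) (ε : ℝ) (hε : 0 < ε) :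
    (∫ x, (∫ u in Iic ((x - x₀) / ε), φ u) * (φ ((x - x₀) / ε) / ε) * ψ x)
      = ∫ t, (∫ u in Iic t, φ u) * φ t * ψ (x₀ + ε * t) := by
  set Φ : ℝ → ℝ := fun s => ∫ u in Iic s, φ u with hΦ
  set K : ℝ → ℝ := fun u => Φ u * (φ u / ε) * ψ (x₀ + ε * u) with hK
  have step1 : ∀ x, Φ ((x - x₀) / ε) * (φ ((x - x₀) / ε) / ε) * ψ x = K ((x - x₀) / ε) := by
    intro x
    simp only [hK]
    rw [mul_div_cancel₀ _ (ne_of_gt hε)]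
    ring_nf
  change ∫ x, Φ ((x - x₀) / ε) * (φ ((x - x₀) / ε) / ε) * ψ x = ∫ t, Φ t * φ t * ψ (x₀ + ε * t)
  simp only [step1]
  have step2 : (∫ x, K ((x - x₀) / ε)) = ∫ x, (fun z => K (z / ε)) (x - x₀) := rfl
  have step3 : (∫ x, (fun z => K (z / ε)) (x - x₀)) = ∫ z, (fun z => K (z / ε)) z := by
    exact integral_sub_right_eq_self (fun z => K (z / ε)) x₀
  rw [step2, step3]
  simp only
  rw [Measure.integral_comp_div, abs_of_pos hε]
  rw [← integral_smul]
  congr 1; funext u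
  simp only [hK, smul_eq_mul]
  field_simp

/-- For a model delta net `φ_ε(x) = φ(x/ε)/ε`, the limit as `ε → 0⁺` of
`(H(·−x₀)∗φ_ε)·(δ_{x₀}∗φ_ε)` exists in `D'(ℝ)` and equals `δ_{x₀}/2`:
the pairing with every test function `ψ` tends to `ψ(x₀)/2`. -/
theorem modelProduct_heavisidePlus_dirac (x₀ : ℝ) :
    ∀ φ : ℝ → ℝ, ContDiff ℝ (⊤ : ℕ∞) φ → HasCompactSupport φ → (∫ x, φ x) = 1 →
    ∀ ψ : ℝ → ℝ, ContDiff ℝ (⊤ : ℕ∞) ψ → HasCompactSupport ψ →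
    Tendsto
      (fun ε : ℝ => ∫ x,
        (∫ y, (if x₀ ≤ y then (1 : ℝ) else 0) * (φ ((x - y) / ε) / ε)) *
          (φ ((x - x₀) / ε) / ε) * ψ x)
      (nhdsWithin 0 (Set.Ioi 0)) (nhds (ψ x₀ / 2)) := by
  intro φ hφsm hφc hφ1 ψ hψsm hψc
  have hφcont : Continuous φ := hφsm.continuous
  have hψcont : Continuous ψ := hψsm.continuous
  have hφint : Integrable φ := hφcont.integrable_of_hasCompactSupport hφc
  set Φ : ℝ → ℝ := fun s => ∫ u in Iic s, φ u with hΦdef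
  have hΦd : ∀ t, HasDerivAt Φ (φ t) t := aux_hasDerivAt_primIic φ hφcont hφint
  have hΦc : Continuous Φ := continuous_iff_continuousAt.2 fun t => (hΦd t).continuousAt
  -- the integral equals the rescaled one for ε > 0
  have key : ∀ ε ∈ Ioi (0:ℝ),
      (∫ x, (∫ y, (if x₀ ≤ y then (1 : ℝ) else 0) * (φ ((x - y) / ε) / ε)) *
          (φ ((x - x₀) / ε) / ε) * ψ x)
        = ∫ t, Φ t * φ t * ψ (x₀ + ε * t) := by
    intro ε hε
    rw [mem_Ioi] at hε
    have h1 : ∀ x, (∫ y, (if x₀ ≤ y then (1 : ℝ) else 0) * (φ ((x - y) / ε) / ε))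
        = Φ ((x - x₀) / ε) := fun x => aux_inner x₀ φ ε hε x
    simp only [h1]
    exact aux_outer x₀ φ ψ ε hε
  -- bounds
  set C : ℝ := ∫ u, |φ u| with hC
  have hΦbdd : ∀ s, |Φ s| ≤ C := by
    intro s
    have h1 : |Φ s| ≤ ∫ u in Iic s, |φ u| := by
      simpa [Real.norm_eq_abs] using
        norm_integral_le_integral_norm (μ := volume.restrict (Iic s)) φ
    exact h1.trans (setIntegral_le_integral hφint.abs
      (Eventually.of_forall fun x => abs_nonneg _))
  have hC0 : 0 ≤ C := by
    have := (abs_nonneg (Φ 0)).trans (hΦbdd 0)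
    exact this
  obtain ⟨D, hD⟩ : ∃ D, ∀ x, |ψ x| ≤ D := by
    simpa [Real.norm_eq_abs] using hψcont.bounded_above_of_compact_support hψc
  have hD0 : 0 ≤ D := (abs_nonneg (ψ 0)).trans (hD 0)
  -- dominated convergence
  have hlim : Tendsto (fun ε : ℝ => ∫ t, Φ t * φ t * ψ (x₀ + ε * t))
      (nhdsWithin 0 (Set.Ioi 0)) (nhds (∫ t, Φ t * φ t * ψ x₀)) := by
    apply tendsto_integral_filter_of_dominated_convergence
      (bound := fun t => C * |φ t| * D)
    · filter_upwards with ε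
      exact ((hΦc.mul hφcont).mul
        (hψcont.comp (continuous_const.add (continuous_const.mul continuous_id)))
        ).aestronglyMeasurable
    · filter_upwards with ε
      filter_upwards with t
      rw [Real.norm_eq_abs, abs_mul, abs_mul]
      have h1 : |Φ t| * |φ t| ≤ C * |φ t| :=
        mul_le_mul_of_nonneg_right (hΦbdd t) (abs_nonneg _)
      exact mul_le_mul h1 (hD _) (abs_nonneg _)
        (mul_nonneg hC0 (abs_nonneg _))
    · exact (hφint.abs.const_mul C).mul_const D
    · filter_upwards with t
      have h2 : Tendsto (fun ε : ℝ => x₀ + ε * t) (nhdsWithin 0 (Set.Ioi 0)) (nhds x₀) := by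
        have : Tendsto (fun ε : ℝ => x₀ + ε * t) (nhds 0) (nhds (x₀ + 0 * t)) :=
          (continuous_const.add (continuous_id.mul continuous_const)).tendsto 0
        simpa using this.mono_left nhdsWithin_le_nhds
      exact tendsto_const_nhds.mul (hψcont.continuousAt.tendsto.comp h2)
  have hval : (∫ t, Φ t * φ t * ψ x₀) = ψ x₀ / 2 := by
    rw [integral_mul_const, aux_half φ hφcont hφc hφ1]
    ring
  rw [hval] at hlim
  refine hlim.congr' ?_
  filter_upwards [eventually_mem_nhdsWithin] with ε hε
  exact (key ε hε).symm
end

section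
/- Let T be the operator T u := a·u'' on L²([0,1]) with a = A·H(x₀−·) + B·H(·−x₀), A, B > 0, and domain D(T) = {u ∈ H²((0,1)) : u(0) = u(1) = 0, B·u(x₀−) − A·u(x₀+) = 0, B·u'(x₀+) − A·u'(x₀−) = 0}. Then T is symmetric: for all u, v ∈ D(T), ⟨T u, v⟩_{L²} = ⟨u, T v⟩_{L²}. -/
open MeasureTheory Filter Real Set


lemma ibp_aux {c d : ℝ} (hcd : c ≤ d) {f₁ f₂ g g₁ : ℝ → ℝ}
    (hf₂ : IntegrableOn f₂ (Set.Ioc c d))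
    (hg₁ : IntegrableOn g₁ (Set.Ioc c d))
    (hfg : IntegrableOn (fun x => f₂ x * g x) (Set.Ioc c d))
    (hf₁g₁ : IntegrableOn (fun x => f₁ x * g₁ x) (Set.Ioc c d))
    (hf : ∀ x ∈ Set.Icc c d, f₁ x = f₁ c + ∫ t in Set.Ioc c x, f₂ t)
    (hg : ∀ x ∈ Set.Icc c d, g x = g c + ∫ t in Set.Ioc c x, g₁ t) :
    (∫ x in Set.Ioc c d, f₂ x * g x) + ∫ x in Set.Ioc c d, f₁ x * g₁ x
      = f₁ d * g d - f₁ c * g c := by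
  set μ := volume.restrict (Set.Ioc c d) with hμdef
  have hf₂' : Integrable f₂ μ := hf₂
  have hg₁' : Integrable g₁ μ := hg₁
  have hS : MeasurableSet {p : ℝ × ℝ | p.2 ≤ p.1} :=
    measurableSet_le measurable_snd measurable_fst
  have hT : MeasurableSet {p : ℝ × ℝ | p.1 ≤ p.2} :=
    measurableSet_le measurable_fst measurable_snd
  have hD : MeasurableSet {p : ℝ × ℝ | p.1 = p.2} :=
    measurableSet_eq_fun measurable_fst measurable_snd
  set F : ℝ × ℝ → ℝ := fun p => f₂ p.1 * g₁ p.2 with hFdef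
  have hF : Integrable F (μ.prod μ) := hf₂'.mul_prod hg₁'
  have hFS : Integrable ({p : ℝ × ℝ | p.2 ≤ p.1}.indicator F) (μ.prod μ) := hF.indicator hS
  have hFT : Integrable ({p : ℝ × ℝ | p.1 ≤ p.2}.indicator F) (μ.prod μ) := hF.indicator hT
  -- restrict-restrict computation
  have hrr : ∀ x ∈ Set.Ioc c d, μ.restrict (Set.Iic x) = volume.restrict (Set.Ioc c x) := by
    intro x hx
    rw [hμdef, Measure.restrict_restrict measurableSet_Iic]
    congr 1
    ext t
    simp only [Set.mem_inter_iff, Set.mem_Iic, Set.mem_Ioc]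
    constructor
    · rintro ⟨h1, h2, h3⟩; exact ⟨h2, h1⟩
    · rintro ⟨h1, h2⟩; exact ⟨h2, h1, h2.trans hx.2⟩
  -- value of A
  have hA : (∫ p, ({p : ℝ × ℝ | p.2 ≤ p.1}.indicator F) p ∂(μ.prod μ))
      = ∫ x, f₂ x * (g x - g c) ∂μ := by
    have hFS' : Integrable (Function.uncurry fun x t =>
        ({p : ℝ × ℝ | p.2 ≤ p.1}.indicator F) (x, t)) (μ.prod μ) := hFS
    have := (MeasureTheory.integral_integral hFS').symm
    refine Eq.trans this ?_
    refine integral_congr_ae ?_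
    filter_upwards [ae_restrict_mem measurableSet_Ioc] with x hx
    have h1 : (fun t => ({p : ℝ × ℝ | p.2 ≤ p.1}.indicator F) (x, t))
        = (Set.Iic x).indicator (fun t => f₂ x * g₁ t) := by
      funext t
      by_cases h : t ≤ x <;> simp [Set.indicator, h, hFdef]
    rw [h1, integral_indicator measurableSet_Iic, hrr x hx, integral_const_mul _ _,
      hg x ⟨hx.1.le, hx.2⟩]
    ring
  -- value of B
  have hB : (∫ p, ({p : ℝ × ℝ | p.1 ≤ p.2}.indicator F) p ∂(μ.prod μ))
      = ∫ t, (f₁ t - f₁ c) * g₁ t ∂μ := by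
    have hFT' : Integrable (Function.uncurry fun x t =>
        ({p : ℝ × ℝ | p.1 ≤ p.2}.indicator F) (x, t)) (μ.prod μ) := hFT
    have h0 := (MeasureTheory.integral_integral hFT').symm
    refine Eq.trans h0 ?_
    refine Eq.trans (MeasureTheory.integral_integral_swap hFT') ?_
    refine integral_congr_ae ?_
    filter_upwards [ae_restrict_mem measurableSet_Ioc] with t ht
    have h1 : (fun x => ({p : ℝ × ℝ | p.1 ≤ p.2}.indicator F) (x, t))
        = (Set.Iic t).indicator (fun x => f₂ x * g₁ t) := by
      funext x
      by_cases h : x ≤ t <;> simp [Set.indicator, h, hFdef]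
    rw [h1, integral_indicator measurableSet_Iic, hrr t ht, integral_mul_const _ _]
    have := hf t ⟨ht.1.le, ht.2⟩
    have h2 : (∫ s in Set.Ioc c t, f₂ s) = f₁ t - f₁ c := by linarith [this]
    rw [h2]
  -- diagonal is null
  have hdiag : (μ.prod μ) {p : ℝ × ℝ | p.1 = p.2} = 0 := by
    rw [Measure.prod_apply hD]
    have : ∀ x, μ (Prod.mk x ⁻¹' {p : ℝ × ℝ | p.1 = p.2}) = 0 := by
      intro x
      have hpre : Prod.mk x ⁻¹' {p : ℝ × ℝ | p.1 = p.2} = {x} := by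
        ext t; simp [eq_comm]
      rw [hpre, hμdef, Measure.restrict_apply (measurableSet_singleton x)]
      exact measure_mono_null Set.inter_subset_left (Real.volume_singleton)
    simp [this]
  -- sum identity
  have hsum : ∀ p : ℝ × ℝ, ({p : ℝ × ℝ | p.2 ≤ p.1}.indicator F) p
      + ({p : ℝ × ℝ | p.1 ≤ p.2}.indicator F) p
      = F p + ({p : ℝ × ℝ | p.1 = p.2}.indicator F) p := by
    intro p
    rcases lt_trichotomy p.1 p.2 with h | h | h
    · simp [Set.indicator, not_le.mpr h, h.le, h.ne]
    · simp [Set.indicator, h.le, h.ge, h]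
    · simp [Set.indicator, not_le.mpr h, h.le, (ne_of_gt h)]
  have hAB : (∫ p, ({p : ℝ × ℝ | p.2 ≤ p.1}.indicator F) p ∂(μ.prod μ))
      + (∫ p, ({p : ℝ × ℝ | p.1 ≤ p.2}.indicator F) p ∂(μ.prod μ))
      = (∫ x, f₂ x ∂μ) * (∫ t, g₁ t ∂μ) := by
    rw [← integral_add hFS hFT]
    have h1 : (fun p => ({p : ℝ × ℝ | p.2 ≤ p.1}.indicator F) p
        + ({p : ℝ × ℝ | p.1 ≤ p.2}.indicator F) p)
        = fun p => F p + ({p : ℝ × ℝ | p.1 = p.2}.indicator F) p := funext hsum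
    rw [h1, integral_add hF (hF.indicator hD)]
    have h2 : (∫ p, ({p : ℝ × ℝ | p.1 = p.2}.indicator F) p ∂(μ.prod μ)) = 0 := by
      refine integral_eq_zero_of_ae ?_
      exact indicator_meas_zero hdiag
    rw [h2, add_zero]
    exact integral_prod_mul f₂ g₁
  -- decompose the two integrals
  have hsub1 : Integrable (fun x => f₂ x * (g x - g c)) μ := by
    have h := hfg.sub (hf₂'.mul_const (g c))
    refine h.congr (Filter.Eventually.of_forall fun x => ?_)
    simp only [Pi.sub_apply]; ring
  have hsub2 : Integrable (fun t => (f₁ t - f₁ c) * g₁ t) μ := by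
    have h := hf₁g₁.sub (hg₁'.const_mul (f₁ c))
    refine h.congr (Filter.Eventually.of_forall fun x => ?_)
    simp only [Pi.sub_apply]; ring
  have h1 : (∫ x, f₂ x * g x ∂μ)
      = (∫ x, f₂ x ∂μ) * g c + ∫ x, f₂ x * (g x - g c) ∂μ := by
    have he : (fun x => f₂ x * g x) = fun x => f₂ x * g c + f₂ x * (g x - g c) := by
      funext x; ring
    rw [he, integral_add (hf₂'.mul_const _) hsub1, integral_mul_const _ _]
  have h2 : (∫ t, f₁ t * g₁ t ∂μ)
      = f₁ c * (∫ t, g₁ t ∂μ) + ∫ t, (f₁ t - f₁ c) * g₁ t ∂μ := by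
    have he : (fun t => f₁ t * g₁ t) = fun t => f₁ c * g₁ t + (f₁ t - f₁ c) * g₁ t := by
      funext t; ring
    rw [he, integral_add (hg₁'.const_mul _) hsub2, integral_const_mul _ _]
  have hfd := hf d ⟨hcd, le_rfl⟩
  have hgd := hg d ⟨hcd, le_rfl⟩
  have hp : (∫ x, f₂ x ∂μ) = f₁ d - f₁ c := by rw [hfd]; ring
  have hq : (∫ t, g₁ t ∂μ) = g d - g c := by rw [hgd]; ring
  rw [hA, hB, hp, hq] at hAB
  rw [h1, h2, hp, hq]
  linear_combination hAB

/-- The operator `T u := a·u''` with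
`a = A·H(x₀−·) + B·H(·−x₀)`, `A, B > 0`, on the domain
`D(T) = {u ∈ H²((0,1)) : u(0) = u(1) = 0, B·u(x₀−) − A·u(x₀+) = 0,
B·u'(x₀+) − A·u'(x₀−) = 0}` is symmetric: `⟨T u, v⟩_{L²} = ⟨u, T v⟩_{L²}` for all
`u, v ∈ D(T)`.  Here `u ∈ H²((0,1)) ⊂ C¹([0,1])` is modelled by `u` with derivative `u₁`
and second derivative `u₂ ∈ L²(0,1)` related by indefinite integration, and since `u, u₁`
are continuous the one-sided values at `x₀` are `u(x₀)` and `u₁(x₀)`. -/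
theorem operator_T_symmetric (A B x₀ : ℝ)
    (hA : 0 < A) (hB : 0 < B) (hx₀ : x₀ ∈ Set.Ioo (0 : ℝ) 1)
    (u u₁ u₂ v v₁ v₂ : ℝ → ℝ)
    (hu₂ : MeasureTheory.MemLp u₂ 2 (volume.restrict (Set.Icc (0 : ℝ) 1)))
    (hv₂ : MeasureTheory.MemLp v₂ 2 (volume.restrict (Set.Icc (0 : ℝ) 1)))
    (huAC : ∀ c d : ℝ, 0 ≤ c → c ≤ d → d ≤ 1 → u d = u c + ∫ t in c..d, u₁ t)
    (huAC' : ∀ c d : ℝ, 0 ≤ c → c ≤ d → d ≤ 1 → u₁ d = u₁ c + ∫ t in c..d, u₂ t)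
    (hvAC : ∀ c d : ℝ, 0 ≤ c → c ≤ d → d ≤ 1 → v d = v c + ∫ t in c..d, v₁ t)
    (hvAC' : ∀ c d : ℝ, 0 ≤ c → c ≤ d → d ≤ 1 → v₁ d = v₁ c + ∫ t in c..d, v₂ t)
    (hu0 : u 0 = 0) (hu1 : u 1 = 0) (hv0 : v 0 = 0) (hv1 : v 1 = 0)
    (humatch : B * u x₀ - A * u x₀ = 0) (humatch' : B * u₁ x₀ - A * u₁ x₀ = 0)
    (hvmatch : B * v x₀ - A * v x₀ = 0) (hvmatch' : B * v₁ x₀ - A * v₁ x₀ = 0) :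
    ∫ x in Set.Icc (0 : ℝ) 1,
      (A * (if x ≤ x₀ then (1 : ℝ) else 0) + B * (if x₀ ≤ x then 1 else 0)) * u₂ x * v x
    = ∫ x in Set.Icc (0 : ℝ) 1,
        u x * ((A * (if x ≤ x₀ then (1 : ℝ) else 0) + B * (if x₀ ≤ x then 1 else 0)) *
          v₂ x) := by
  obtain ⟨hx0, hx1⟩ := hx₀
  haveI : IsFiniteMeasure (volume.restrict (Set.Icc (0:ℝ) 1)) := by
    constructor
    rw [Measure.restrict_apply_univ, Real.volume_Icc]
    exact ENNReal.ofReal_lt_top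
  have hu₂int : IntegrableOn u₂ (Set.Icc (0:ℝ) 1) := hu₂.integrable one_le_two
  have hv₂int : IntegrableOn v₂ (Set.Icc (0:ℝ) 1) := hv₂.integrable one_le_two
  -- continuity from the AC hypotheses
  have key : ∀ (f f' : ℝ → ℝ), IntegrableOn f' (Set.Icc (0:ℝ) 1) →
      (∀ c d : ℝ, 0 ≤ c → c ≤ d → d ≤ 1 → f d = f c + ∫ t in c..d, f' t) →
      ContinuousOn f (Set.Icc (0:ℝ) 1) := by
    intro f f' hint hAC
    have hprim := intervalIntegral.continuousOn_primitive (f := f') (a := 0) (b := 1)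
      (μ := volume) hint
    refine ((continuousOn_const (c := f 0)).add hprim).congr ?_
    intro x hx
    rw [hAC 0 x le_rfl hx.1 hx.2, intervalIntegral.integral_of_le hx.1]; rfl
  have hcu₁ : ContinuousOn u₁ (Set.Icc (0:ℝ) 1) := key u₁ u₂ hu₂int huAC'
  have hcv₁ : ContinuousOn v₁ (Set.Icc (0:ℝ) 1) := key v₁ v₂ hv₂int hvAC'
  have hu₁int : IntegrableOn u₁ (Set.Icc (0:ℝ) 1) := hcu₁.integrableOn_Icc
  have hv₁int : IntegrableOn v₁ (Set.Icc (0:ℝ) 1) := hcv₁.integrableOn_Icc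
  have hcu : ContinuousOn u (Set.Icc (0:ℝ) 1) := key u u₁ hu₁int huAC
  have hcv : ContinuousOn v (Set.Icc (0:ℝ) 1) := key v v₁ hv₁int hvAC
  -- product integrability
  have prodint : ∀ (f g : ℝ → ℝ), IntegrableOn f (Set.Icc (0:ℝ) 1) →
      ContinuousOn g (Set.Icc (0:ℝ) 1) →
      IntegrableOn (fun x => f x * g x) (Set.Icc (0:ℝ) 1) := by
    intro f g hf hg
    obtain ⟨C, hC⟩ := isCompact_Icc.exists_bound_of_continuousOn hg
    have hbd : ∀ᵐ x ∂(volume.restrict (Set.Icc (0:ℝ) 1)), ‖g x‖ ≤ C :=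
      (ae_restrict_mem measurableSet_Icc).mono fun x hx => hC x hx
    have h := hf.bdd_mul (hg.aestronglyMeasurable measurableSet_Icc) hbd
    exact h.congr (Filter.Eventually.of_forall fun x => mul_comm _ _)
  have hu₂v : IntegrableOn (fun x => u₂ x * v x) (Set.Icc (0:ℝ) 1) := prodint u₂ v hu₂int hcv
  have hv₂u : IntegrableOn (fun x => v₂ x * u x) (Set.Icc (0:ℝ) 1) := prodint v₂ u hv₂int hcu
  have hu₁v₁ : IntegrableOn (fun x => u₁ x * v₁ x) (Set.Icc (0:ℝ) 1) :=
    prodint u₁ v₁ hu₁int hcv₁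
  have hv₁u₁ : IntegrableOn (fun x => v₁ x * u₁ x) (Set.Icc (0:ℝ) 1) :=
    prodint v₁ u₁ hv₁int hcu₁
  have hsub1 : Set.Ioc (0:ℝ) x₀ ⊆ Set.Icc (0:ℝ) 1 := fun t ht => ⟨ht.1.le, ht.2.trans hx1.le⟩
  have hsub2 : Set.Ioc x₀ (1:ℝ) ⊆ Set.Icc (0:ℝ) 1 := fun t ht => ⟨hx0.le.trans ht.1.le, ht.2⟩
  -- AC in Ioc form
  have AC : ∀ (f f' : ℝ → ℝ),
      (∀ c d : ℝ, 0 ≤ c → c ≤ d → d ≤ 1 → f d = f c + ∫ t in c..d, f' t) →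
      ∀ (c : ℝ), 0 ≤ c → ∀ (d : ℝ), d ≤ 1 →
      ∀ x ∈ Set.Icc c d, f x = f c + ∫ t in Set.Ioc c x, f' t := by
    intro f f' h c hc d hd x hx
    rw [h c x hc hx.1 (hx.2.trans hd), intervalIntegral.integral_of_le hx.1]
  have P1 := ibp_aux hx0.le (hu₂int.mono_set hsub1) (hv₁int.mono_set hsub1)
    (hu₂v.mono_set hsub1) (hu₁v₁.mono_set hsub1)
    (AC u₁ u₂ huAC' 0 le_rfl x₀ hx1.le) (AC v v₁ hvAC 0 le_rfl x₀ hx1.le)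
  have P2 := ibp_aux hx0.le (hv₂int.mono_set hsub1) (hu₁int.mono_set hsub1)
    (hv₂u.mono_set hsub1) (hv₁u₁.mono_set hsub1)
    (AC v₁ v₂ hvAC' 0 le_rfl x₀ hx1.le) (AC u u₁ huAC 0 le_rfl x₀ hx1.le)
  have P3 := ibp_aux hx1.le (hu₂int.mono_set hsub2) (hv₁int.mono_set hsub2)
    (hu₂v.mono_set hsub2) (hu₁v₁.mono_set hsub2)
    (AC u₁ u₂ huAC' x₀ hx0.le 1 le_rfl) (AC v v₁ hvAC x₀ hx0.le 1 le_rfl)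
  have P4 := ibp_aux hx1.le (hv₂int.mono_set hsub2) (hu₁int.mono_set hsub2)
    (hv₂u.mono_set hsub2) (hv₁u₁.mono_set hsub2)
    (AC v₁ v₂ hvAC' x₀ hx0.le 1 le_rfl) (AC u u₁ huAC x₀ hx0.le 1 le_rfl)
  have hcomm : (fun x => v₁ x * u₁ x) = fun x => u₁ x * v₁ x := funext fun x => mul_comm _ _
  rw [hcomm] at P2 P4
  -- a.e. congruences on the two pieces
  have hne : ∀ᵐ x ∂(volume.restrict (Set.Ioc (0:ℝ) x₀)), x ≠ x₀ := by
    refine ae_iff.mpr ?_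
    have h0 : {a : ℝ | ¬ a ≠ x₀} = {x₀} := by ext y; simp
    rw [h0, Measure.restrict_apply (measurableSet_singleton _)]
    exact measure_mono_null Set.inter_subset_left Real.volume_singleton
  have heq₁ : ∀ᵐ x ∂(volume.restrict (Set.Ioc (0:ℝ) x₀)),
      (A * (if x ≤ x₀ then (1:ℝ) else 0) + B * (if x₀ ≤ x then 1 else 0)) * u₂ x * v x
      = A * (u₂ x * v x) := by
    filter_upwards [ae_restrict_mem measurableSet_Ioc, hne] with x hx hxne
    have h2 : ¬ x₀ ≤ x := fun h => hxne (le_antisymm hx.2 h)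
    simp only [if_pos hx.2, if_neg h2]
    ring
  have heq₂ : ∀ᵐ x ∂(volume.restrict (Set.Ioc x₀ (1:ℝ))),
      (A * (if x ≤ x₀ then (1:ℝ) else 0) + B * (if x₀ ≤ x then 1 else 0)) * u₂ x * v x
      = B * (u₂ x * v x) := by
    filter_upwards [ae_restrict_mem measurableSet_Ioc] with x hx
    simp only [if_neg (not_le.mpr hx.1), if_pos hx.1.le]
    ring
  have heq₃ : ∀ᵐ x ∂(volume.restrict (Set.Ioc (0:ℝ) x₀)),
      u x * ((A * (if x ≤ x₀ then (1:ℝ) else 0) + B * (if x₀ ≤ x then 1 else 0)) * v₂ x)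
      = A * (v₂ x * u x) := by
    filter_upwards [ae_restrict_mem measurableSet_Ioc, hne] with x hx hxne
    have h2 : ¬ x₀ ≤ x := fun h => hxne (le_antisymm hx.2 h)
    simp only [if_pos hx.2, if_neg h2]
    ring
  have heq₄ : ∀ᵐ x ∂(volume.restrict (Set.Ioc x₀ (1:ℝ))),
      u x * ((A * (if x ≤ x₀ then (1:ℝ) else 0) + B * (if x₀ ≤ x then 1 else 0)) * v₂ x)
      = B * (v₂ x * u x) := by
    filter_upwards [ae_restrict_mem measurableSet_Ioc] with x hx
    simp only [if_neg (not_le.mpr hx.1), if_pos hx.1.le]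
    ring
  have hIoc : Set.Ioc (0:ℝ) 1 = Set.Ioc 0 x₀ ∪ Set.Ioc x₀ 1 :=
    (Set.Ioc_union_Ioc_eq_Ioc hx0.le hx1.le).symm
  have hLsplit : (∫ x in Set.Icc (0:ℝ) 1,
      (A * (if x ≤ x₀ then (1:ℝ) else 0) + B * (if x₀ ≤ x then 1 else 0)) * u₂ x * v x)
      = A * (∫ x in Set.Ioc (0:ℝ) x₀, u₂ x * v x)
        + B * (∫ x in Set.Ioc x₀ (1:ℝ), u₂ x * v x) := by
    rw [MeasureTheory.integral_Icc_eq_integral_Ioc, hIoc,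
      MeasureTheory.setIntegral_union (Set.Ioc_disjoint_Ioc_of_le le_rfl) measurableSet_Ioc
        (((hu₂v.mono_set hsub1).const_mul A).congr (Filter.EventuallyEq.symm heq₁))
        (((hu₂v.mono_set hsub2).const_mul B).congr (Filter.EventuallyEq.symm heq₂)),
      integral_congr_ae heq₁, integral_congr_ae heq₂,
      MeasureTheory.integral_const_mul, MeasureTheory.integral_const_mul]
  have hRsplit : (∫ x in Set.Icc (0:ℝ) 1,
      u x * ((A * (if x ≤ x₀ then (1:ℝ) else 0) + B * (if x₀ ≤ x then 1 else 0)) * v₂ x))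
      = A * (∫ x in Set.Ioc (0:ℝ) x₀, v₂ x * u x)
        + B * (∫ x in Set.Ioc x₀ (1:ℝ), v₂ x * u x) := by
    rw [MeasureTheory.integral_Icc_eq_integral_Ioc, hIoc,
      MeasureTheory.setIntegral_union (Set.Ioc_disjoint_Ioc_of_le le_rfl) measurableSet_Ioc
        (((hv₂u.mono_set hsub1).const_mul A).congr (Filter.EventuallyEq.symm heq₃))
        (((hv₂u.mono_set hsub2).const_mul B).congr (Filter.EventuallyEq.symm heq₄)),
      integral_congr_ae heq₃, integral_congr_ae heq₄,
      MeasureTheory.integral_const_mul, MeasureTheory.integral_const_mul]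
  rw [hLsplit, hRsplit]
  linear_combination A * P1 - A * P2 + B * P3 - B * P4 - v x₀ * humatch'
    + v₁ x₀ * humatch - A * u₁ 0 * hv0 + A * v₁ 0 * hu0 + B * u₁ 1 * hv1 - B * v₁ 1 * hu1
end
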